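/- For every real exponent p with 1 < p < 2 and all real numbers a and b, |a + b|^p ≤ |a|^p + |b|^p + p |a| |b|^{p-1}. -/

import Mathlib

/-! For fixed `y ≥ 0` the gap `x ^ p + y ^ p + p x y ^ (p - 1) - (x + y) ^ p` vanishes at `x = 0`,
and its derivative `p (x ^ (p - 1) + y ^ (p - 1) - (x + y) ^ (p - 1))` is nonnegative on `x ≥ 0`
because `t ↦ t ^ (p - 1)` is subadditive for `0 ≤ p - 1 ≤ 1`. The case of arbitrary signs follows
from `|a + b| ≤ |a| + |b|` and monotonicity of `t ↦ t ^ p`. -/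

open Real Set

lemma hasDerivAt_rpow_add_rpow_add_mul_sub_rpow_add {p : ℝ} (hp : 1 ≤ p) (y t : ℝ) :
    HasDerivAt (fun x ↦ x ^ p + y ^ p + p * x * y ^ (p - 1) - (x + y) ^ p)
      (p * (t ^ (p - 1) + y ^ (p - 1) - (t + y) ^ (p - 1))) t := by
  have hpow : HasDerivAt (fun x : ℝ ↦ x ^ p) (p * t ^ (p - 1)) t :=
    hasDerivAt_rpow_const (Or.inr hp)
  have hlin : HasDerivAt (fun x : ℝ ↦ p * x * y ^ (p - 1)) (p * y ^ (p - 1)) t := by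
    simpa using ((hasDerivAt_id t).const_mul p).mul_const (y ^ (p - 1))
  have hshift : HasDerivAt (fun x : ℝ ↦ (x + y) ^ p) (1 * p * (t + y) ^ (p - 1)) t :=
    ((hasDerivAt_id t).add_const y).rpow_const (Or.inr hp)
  exact (((hpow.add_const (y ^ p)).add hlin).sub hshift).congr_deriv (by ring)

lemma rpow_add_le_rpow_add_rpow_add_mul {p x y : ℝ} (hp1 : 1 ≤ p) (hp2 : p ≤ 2)
    (hx : 0 ≤ x) (hy : 0 ≤ y) :
    (x + y) ^ p ≤ x ^ p + y ^ p + p * x * y ^ (p - 1) := by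
  set gap : ℝ → ℝ := fun x ↦ x ^ p + y ^ p + p * x * y ^ (p - 1) - (x + y) ^ p
  have hderiv := hasDerivAt_rpow_add_rpow_add_mul_sub_rpow_add hp1 y
  have hmono : MonotoneOn gap (Ici 0) := by
    refine monotoneOn_of_hasDerivWithinAt_nonneg (convex_Ici 0)
      (fun t _ ↦ (hderiv t).continuousAt.continuousWithinAt)
      (fun t _ ↦ (hderiv t).hasDerivWithinAt) fun t ht ↦ ?_
    rw [interior_Ici, mem_Ioi] at ht
    have hsub : (t + y) ^ (p - 1) ≤ t ^ (p - 1) + y ^ (p - 1) :=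
      rpow_add_le_add_rpow ht.le hy (by linarith) (by linarith)
    exact mul_nonneg (by linarith) (by linarith)
  have hgap0 : gap 0 = 0 := by
    simp [gap, zero_rpow (by linarith : p ≠ 0)]
  have hgap : 0 ≤ gap x := hgap0 ▸ hmono self_mem_Ici hx hx
  simpa only [gap, sub_nonneg] using hgap

theorem stmt_1 (p : ℝ) (hp1 : 1 < p) (hp2 : p < 2) (a b : ℝ) :
    |a + b| ^ p ≤ |a| ^ p + |b| ^ p + p * |a| * |b| ^ (p - 1) :=
  calc |a + b| ^ p ≤ (|a| + |b|) ^ p :=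
        rpow_le_rpow (abs_nonneg _) (abs_add_le a b) (by linarith)
    _ ≤ |a| ^ p + |b| ^ p + p * |a| * |b| ^ (p - 1) :=
        rpow_add_le_rpow_add_rpow_add_mul hp1.le hp2.le (abs_nonneg a) (abs_nonneg b)
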